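/- For every n ≥ 1, the n-dimensional hypercube Q_n is Hamiltonian laceable: for any two vertices x and y of Q_n with opposite parity (i.e., lying in different parts of the bipartition), there is a Hamiltonian path of Q_n from x to y. -/

import Mathlib

open SimpleGraph Finset
open scoped Classical

/-- The `n`-dimensional hypercube graph: vertices are `Fin n → Bool`,
adjacent iff they differ in exactly one coordinate. -/
def Q (n : ℕ) : SimpleGraph (Fin n → Bool) :=
  SimpleGraph.fromRel fun x y => (Finset.univ.filter fun i => x i ≠ y i).card = 1

/-- Parity of a vertex of the hypercube: sum of coordinates mod 2. -/
def qparity {n : ℕ} (x : Fin n → Bool) : ZMod 2 :=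
  ∑ i, if x i then 1 else 0

/-! Induction on `n`, viewing `Q (n + 1)` as two copies of `Q n`, indexed by the first coordinate
and joined by the perfect matching that flips it. Write `x = (b, x')` and `y = (c, y')`.
If `b ≠ c`, then `x'` and `y'` have the same parity, so any neighbour `z` of `x'` has the opposite
one: follow a Hamiltonian path `x' ⇝ z` in copy `b`, cross over at `z` and follow a Hamiltonian
path `z ⇝ y'` in copy `c`. If `b = c`, let `u` be the second vertex of a Hamiltonian path
`x' ⇝ y'`: cross over at `x'`, follow a Hamiltonian path `x' ⇝ u` in the other copy, cross back
at `u` and finish along the rest of the path `x' ⇝ y'`. -/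

open Function Set

namespace SimpleGraph.Walk

variable {α β : Type*} [DecidableEq α] [DecidableEq β] {G : SimpleGraph α} {H : SimpleGraph β}

theorem isHamiltonian_of_support_perm {f g : α → β} (hf : Injective f) (hg : Injective g)
    (hfg : IsCompl (range f) (range g)) {a b c d : α} {p : G.Walk a b} {q : G.Walk c d}
    (hp : p.IsHamiltonian) (hq : q.IsHamiltonian) {u v : β} {W : H.Walk u v}
    (hW : W.support.Perm (p.support.map f ++ q.support.map g)) : W.IsHamiltonian := by
  intro w
  rw [hW.count_eq, List.count_append]
  rcases hfg.codisjoint.top_le (mem_univ w) with ⟨a, rfl⟩ | ⟨a, rfl⟩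
  · rw [List.count_map_of_injective _ _ hf, hp, List.count_eq_zero.mpr]
    simp only [List.mem_map, not_exists, not_and]
    exact fun b _ h => hfg.disjoint.ne_of_mem (mem_range_self a) (mem_range_self b) h.symm
  · rw [List.count_map_of_injective _ _ hg, hq, List.count_eq_zero.mpr]
    simp only [List.mem_map, not_exists, not_and]
    exact fun b _ h => hfg.disjoint.ne_of_mem (mem_range_self b) (mem_range_self a) h

end SimpleGraph.Walk

variable {n : ℕ}

lemma hammingDist_cons {α : Type*} [DecidableEq α] (a b : α) (x y : Fin n → α) :
    hammingDist (Fin.cons a x : Fin (n + 1) → α) (Fin.cons b y)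
      = hammingDist x y + if a = b then 0 else 1 := by
  simp only [hammingDist, card_filter, Fin.sum_univ_succ, Fin.cons_zero, Fin.cons_succ]
  split_ifs <;> simp_all [add_comm]

lemma qparity_ne_iff_odd_hammingDist {x y : Fin n → Bool} :
    qparity x ≠ qparity y ↔ Odd (hammingDist x y) := by
  have hsum : qparity x + qparity y = hammingDist x y := by
    simp only [qparity, hammingDist, card_filter, ← sum_add_distrib, Nat.cast_sum]
    refine sum_congr rfl fun i _ => ?_
    cases x i <;> cases y i <;> decide
  rw [← ZMod.natCast_eq_one_iff_odd, ← hsum]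
  generalize qparity x = a
  generalize qparity y = b
  decide +revert

lemma qparity_cons_ne_iff {b c : Bool} {x y : Fin n → Bool} :
    qparity (Fin.cons b x : Fin (n + 1) → Bool) ≠ qparity (Fin.cons c y : Fin (n + 1) → Bool)
      ↔ (qparity x ≠ qparity y ↔ b = c) := by
  simp only [qparity_ne_iff_odd_hammingDist, hammingDist_cons, Nat.odd_add]
  split_ifs <;> simp [*]

namespace Q

lemma adj_iff {x y : Fin n → Bool} : (Q n).Adj x y ↔ hammingDist x y = 1 := by
  change x ≠ y ∧ (hammingDist x y = 1 ∨ hammingDist y x = 1) ↔ _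
  rw [hammingDist_comm y x, or_self]
  exact ⟨And.right, fun h => ⟨hammingDist_ne_zero.mp (by omega), h⟩⟩

lemma qparity_ne_of_adj {x y : Fin n → Bool} (h : (Q n).Adj x y) : qparity x ≠ qparity y := by
  rw [qparity_ne_iff_odd_hammingDist, adj_iff.mp h]
  exact odd_one

lemma adj_cons_cons (b : Bool) {x y : Fin n → Bool} (h : (Q n).Adj x y) :
    (Q (n + 1)).Adj (Fin.cons b x) (Fin.cons b y) := by
  rw [adj_iff] at h ⊢
  simpa [hammingDist_cons] using h

def consHom (n : ℕ) (b : Bool) : Q n →g Q (n + 1) :=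
  ⟨fun x => Fin.cons b x, adj_cons_cons b⟩

@[simp] lemma consHom_apply (b : Bool) (x : Fin n → Bool) : consHom n b x = Fin.cons b x := rfl

lemma consHom_injective (b : Bool) : Injective (consHom n b) :=
  Fin.cons_right_injective (α := fun _ => Bool) b

lemma adj_consHom_of_ne {b c : Bool} (x : Fin n → Bool) (hbc : b ≠ c) :
    (Q (n + 1)).Adj (consHom n b x) (consHom n c x) := by
  simp [adj_iff, hammingDist_cons, hbc]

lemma exists_adj (x : Fin (n + 1) → Bool) : ∃ y, (Q (n + 1)).Adj x y :=
  ⟨Fin.cons (!x 0) (Fin.tail x), by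
    simpa only [consHom_apply, Fin.cons_self_tail] using
      adj_consHom_of_ne (Fin.tail x) (Bool.not_ne_self (x 0)).symm⟩

lemma isCompl_range_consHom {b c : Bool} (hbc : b ≠ c) :
    IsCompl (range (consHom n b)) (range (consHom n c)) := by
  refine ⟨disjoint_range_iff.mpr fun x y h => hbc (by simpa using congrFun h 0), ?_⟩
  rw [codisjoint_iff_le_sup]
  intro v _
  have hv : v 0 = b ∨ v 0 = c := by
    revert hbc; cases v 0 <;> cases b <;> cases c <;> decide
  rcases hv with h | h
  · exact Or.inl ⟨Fin.tail v, by rw [consHom_apply, ← h, Fin.cons_self_tail]⟩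
  · exact Or.inr ⟨Fin.tail v, by rw [consHom_apply, ← h, Fin.cons_self_tail]⟩

lemma exists_isHamiltonian_of_ne {b c : Bool} (hbc : b ≠ c) {x z y : Fin n → Bool}
    {p : (Q n).Walk x z} {q : (Q n).Walk z y} (hp : p.IsHamiltonian) (hq : q.IsHamiltonian) :
    ∃ W : (Q (n + 1)).Walk (consHom n b x) (consHom n c y), W.IsHamiltonian :=
  ⟨(p.map (consHom n b)).append (.cons (adj_consHom_of_ne z hbc) (q.map (consHom n c))),
    Walk.isHamiltonian_of_support_perm (consHom_injective b) (consHom_injective c)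
      (isCompl_range_consHom hbc) hp hq (by
        rw [Walk.support_append, Walk.support_cons, List.tail_cons, Walk.support_map,
          Walk.support_map])⟩

lemma exists_isHamiltonian_of_eq (b : Bool) {x u y : Fin n → Bool} {h : (Q n).Adj x u}
    {p : (Q n).Walk u y} {q : (Q n).Walk x u} (hp : (Walk.cons h p).IsHamiltonian)
    (hq : q.IsHamiltonian) :
    ∃ W : (Q (n + 1)).Walk (consHom n b x) (consHom n b y), W.IsHamiltonian :=
  ⟨.cons (adj_consHom_of_ne x (Bool.not_ne_self b).symm)
      ((q.map (consHom n !b)).append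
        (.cons (adj_consHom_of_ne u (Bool.not_ne_self b)) (p.map (consHom n b)))),
    Walk.isHamiltonian_of_support_perm (consHom_injective b) (consHom_injective !b)
      (isCompl_range_consHom (Bool.not_ne_self b).symm) hp hq (by
        rw [Walk.support_cons, Walk.support_append, Walk.support_cons, List.tail_cons,
          Walk.support_map, Walk.support_map, Walk.support_cons, List.map_cons]
        exact List.perm_append_comm.cons _)⟩

end Q

theorem hypercube_hamiltonian_laceable_general (n : ℕ)
    (x y : Fin n → Bool) (hxy : qparity x ≠ qparity y) :
    ∃ p : (Q n).Walk x y, p.IsHamiltonian := by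
  induction n with
  | zero => exact absurd (congrArg qparity (Subsingleton.elim x y)) hxy
  | succ n ih =>
    cases x using Fin.consCases with | cons b x => ?_
    cases y using Fin.consCases with | cons c y => ?_
    rw [qparity_cons_ne_iff] at hxy
    rcases eq_or_ne b c with rfl | hbc
    · obtain ⟨p, hp⟩ := ih x y (hxy.mpr rfl)
      obtain ⟨u, h, p, rfl⟩ := p.exists_eq_cons_of_ne (ne_of_apply_ne qparity (hxy.mpr rfl))
      obtain ⟨q, hq⟩ := ih x u (Q.qparity_ne_of_adj h)
      exact Q.exists_isHamiltonian_of_eq b hp hq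
    · have hxy : qparity x = qparity y := not_not.mp (mt hxy.mp hbc)
      cases n with
      | zero =>
        obtain rfl := Subsingleton.elim x y
        exact Q.exists_isHamiltonian_of_ne hbc (Walk.IsHamiltonian.of_subsingleton (p := .nil))
          (Walk.IsHamiltonian.of_subsingleton (p := .nil))
      | succ n =>
        obtain ⟨z, hz⟩ := Q.exists_adj x
        obtain ⟨p, hp⟩ := ih x z (Q.qparity_ne_of_adj hz)
        obtain ⟨q, hq⟩ := ih z y (hxy ▸ (Q.qparity_ne_of_adj hz).symm)
        exact Q.exists_isHamiltonian_of_ne hbc hp hq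

theorem hypercube_hamiltonian_laceable (n : ℕ) (hn : 1 ≤ n)
    (x y : Fin n → Bool) (hxy : qparity x ≠ qparity y) :
    ∃ p : (Q n).Walk x y, p.IsHamiltonian :=
  hypercube_hamiltonian_laceable_general n x y hxy
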